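/- arXiv:2405.00065 — 5 statements merged into one kernel-verified Lean document; each statement's English description precedes it below -/
import Mathlib

section
/- Let f : [0,1]^d → R be differentiable and γ-weakly DR-submodular, meaning ∇f(x) ≥ γ∇f(y) coordinatewise whenever x ≤ y coordinatewise, for some γ ∈ (0,1]. Then f is γ-weakly up-concave: for all x ≤ y in [0,1]^d, γ⟨∇f(y), y−x⟩ ≤ f(y) − f(x) ≤ (1/γ)⟨∇f(x), y−x⟩. -/
open scoped RealInnerProductSpace

/-- The unit box `[0,1]^d` in Euclidean space. -/
def unitBox (d : ℕ) : Set (EuclideanSpace ℝ (Fin d)) :=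
  {x | ∀ i, x i ∈ Set.Icc (0 : ℝ) 1}

/-! By the mean value theorem, `f y - f x = ⟪∇f(z), y - x⟫` for some `z` on the segment `[x, y]`.
Such a `z` satisfies `x ≤ z ≤ y`, and `y - x ≥ 0`, so weak DR-submodularity applied to the pairs
`z ≤ y` and `x ≤ z` bounds this inner product below by `γ⟪∇f(y), y - x⟫` and above by
`γ⁻¹⟪∇f(x), y - x⟫`. -/

theorem Convex.exists_mem_segment_sub_eq_inner_of_hasGradientAt
    {E : Type*} [NormedAddCommGroup E] [InnerProductSpace ℝ E] [CompleteSpace E]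
    {f : E → ℝ} {g : E → E} {s : Set E} {x y : E} (hs : Convex ℝ s)
    (hf : ∀ z ∈ s, HasGradientAt f (g z) z) (hx : x ∈ s) (hy : y ∈ s) :
    ∃ z ∈ segment ℝ x y, f y - f x = ⟪g z, y - x⟫ := by
  obtain ⟨z, hz, h⟩ :=
    domain_mvt (fun z hz => (hf z hz).hasFDerivAt.hasFDerivWithinAt) hs hx hy
  exact ⟨z, hz, by simpa using h⟩

theorem EuclideanSpace.apply_mem_segment {ι : Type*} {x y z : EuclideanSpace ℝ ι}
    (hz : z ∈ segment ℝ x y) (i : ι) : z i ∈ segment ℝ (x i) (y i) :=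
  image_segment ℝ (EuclideanSpace.proj (𝕜 := ℝ) i).toLinearMap.toAffineMap x y ▸ ⟨z, hz, rfl⟩

theorem EuclideanSpace.mul_inner_le_inner {ι : Type*} [Fintype ι] {γ : ℝ}
    {a b v : EuclideanSpace ℝ ι} (hab : ∀ i, γ * b i ≤ a i) (hv : ∀ i, 0 ≤ v i) :
    γ * ⟪b, v⟫ ≤ ⟪a, v⟫ := by
  simp only [PiLp.inner_apply, RCLike.inner_apply, conj_trivial, Finset.mul_sum]
  refine Finset.sum_le_sum fun i _ => ?_
  rw [mul_left_comm]
  exact mul_le_mul_of_nonneg_left (hab i) (hv i)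

theorem convex_unitBox (d : ℕ) : Convex ℝ (unitBox d) := by
  intro x hx y hy a b ha hb hab i
  simpa using convex_Icc (0 : ℝ) 1 (hx i) (hy i) ha hb hab

theorem gammaWeaklyDRSubmodular_is_gammaWeaklyUpConcave_general
    (d : ℕ) (γ : ℝ) (hγ0 : 0 < γ)
    (f : EuclideanSpace ℝ (Fin d) → ℝ)
    (g : EuclideanSpace ℝ (Fin d) → EuclideanSpace ℝ (Fin d))
    (hderiv : ∀ x ∈ unitBox d, HasGradientAt f (g x) x)
    (hDR : ∀ x ∈ unitBox d, ∀ y ∈ unitBox d, (∀ i, x i ≤ y i) → ∀ i, γ * g y i ≤ g x i) :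
    ∀ x ∈ unitBox d, ∀ y ∈ unitBox d, (∀ i, x i ≤ y i) →
      γ * ⟪g y, y - x⟫ ≤ f y - f x ∧ f y - f x ≤ (1 / γ) * ⟪g x, y - x⟫ := by
  intro x hx y hy hxy
  obtain ⟨z, hz, hfz⟩ :=
    (convex_unitBox d).exists_mem_segment_sub_eq_inner_of_hasGradientAt hderiv hx hy
  have hz_box : z ∈ unitBox d := (convex_unitBox d).segment_subset hx hy hz
  have hz_Icc (i : Fin d) : z i ∈ Set.Icc (x i) (y i) :=
    segment_eq_Icc (hxy i) ▸ EuclideanSpace.apply_mem_segment hz i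
  have hyx : ∀ i, 0 ≤ (y - x) i := fun i => by simpa using hxy i
  rw [hfz, one_div, le_inv_mul_iff₀ hγ0]
  exact ⟨EuclideanSpace.mul_inner_le_inner (hDR z hz_box y hy fun i => (hz_Icc i).2) hyx,
    EuclideanSpace.mul_inner_le_inner (hDR x hx z hz_box fun i => (hz_Icc i).1) hyx⟩

/-- If `f : [0,1]^d → ℝ` is differentiable with gradient `g` and `γ`-weakly DR-submodular
(`g x ≥ γ • g y` coordinatewise whenever `x ≤ y` coordinatewise), `γ ∈ (0,1]`, then `f` is
`γ`-weakly up-concave: for all `x ≤ y` in `[0,1]^d`,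
`γ⟨∇f(y), y−x⟩ ≤ f(y) − f(x) ≤ (1/γ)⟨∇f(x), y−x⟩`. -/
theorem gammaWeaklyDRSubmodular_is_gammaWeaklyUpConcave
    (d : ℕ) (γ : ℝ) (hγ0 : 0 < γ) (hγ1 : γ ≤ 1)
    (f : EuclideanSpace ℝ (Fin d) → ℝ)
    (g : EuclideanSpace ℝ (Fin d) → EuclideanSpace ℝ (Fin d))
    (hderiv : ∀ x ∈ unitBox d, HasGradientAt f (g x) x)
    (hDR : ∀ x ∈ unitBox d, ∀ y ∈ unitBox d, (∀ i, x i ≤ y i) → ∀ i, γ * g y i ≤ g x i) :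
    ∀ x ∈ unitBox d, ∀ y ∈ unitBox d, (∀ i, x i ≤ y i) →
      γ * ⟪g y, y - x⟫ ≤ f y - f x ∧ f y - f x ≤ (1 / γ) * ⟪g x, y - x⟫ :=
  gammaWeaklyDRSubmodular_is_gammaWeaklyUpConcave_general d γ hγ0 f g hderiv hDR
end

section
/- Let f : [0,1]^d → R be a non-negative monotone differentiable function that is γ-weakly up-concave with curvature bounded by c ∈ [0,1] and has a μ-strongly γ-weakly up-super-gradient ∇̃f. Then for all x, y ∈ [0,1]^d: (γ²/(1+cγ²)) f(y) − f(x) ≤ (γ/(1+cγ²)) ( ⟨∇̃f(x), y − x⟩ − (μ/2)||y − x||² ). -/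
/-!
Split `y - x` along the coordinatewise maximum `u = x ⊔ y` and minimum `w = x ⊓ y` as
`(u - x) - (x - w)`; the two pieces have disjoint supports, so the quadratic term splits too.
The upper super-gradient bound on `x ≤ u` and the lower one on `w ≤ x` control the two inner
products, and the curvature bound for the shift `x - w`, applied at `w` and at `y`
(note `y + (x - w) = u`), gives `f u - f y ≥ (1 - c) (f x - f w)`. Weighting these by
`γ²`, `γ` and `1` leaves `f w (1 - (1 - c) γ²) ≥ 0` as the only slack.
-/

open scoped RealInnerProductSpace

theorem weighted_sub_le_of_superGradient_curvature_bounds {γ c A B fx fy fu fw : ℝ}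
    (hγ0 : 0 < γ) (hγ1 : γ ≤ 1) (hc0 : 0 ≤ c) (hfw : 0 ≤ fw)
    (hup : fu - fx ≤ 1 / γ * A) (hdown : γ * B ≤ fx - fw)
    (hcurv : (1 - c) * (fx - fw) ≤ fu - fy) :
    γ ^ 2 / (1 + c * γ ^ 2) * fy - fx ≤ γ / (1 + c * γ ^ 2) * (A - B) := by
  have hD : 0 < 1 + c * γ ^ 2 := by positivity
  have hA : γ * (fu - fx) ≤ A := by
    rwa [← le_div_iff₀' hγ0, div_eq_inv_mul, ← one_div]
  have hslack : 0 ≤ fw * (1 - γ ^ 2 + c * γ ^ 2) := by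
    have : γ ^ 2 ≤ 1 := pow_le_one₀ hγ0.le hγ1
    have : 0 ≤ c * γ ^ 2 := by positivity
    exact mul_nonneg hfw (by linarith)
  rw [div_mul_eq_mul_div, div_mul_eq_mul_div, sub_le_iff_le_add, div_le_iff₀ hD, add_mul,
    div_mul_cancel₀ _ hD.ne']
  nlinarith [mul_le_mul_of_nonneg_left hA hγ0.le, mul_le_mul_of_nonneg_left hcurv (sq_nonneg γ)]

namespace EuclideanSpace

variable {ι : Type*}

def coordMax (x y : EuclideanSpace ℝ ι) : EuclideanSpace ℝ ι :=
  WithLp.toLp 2 (WithLp.ofLp x ⊔ WithLp.ofLp y)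

def coordMin (x y : EuclideanSpace ℝ ι) : EuclideanSpace ℝ ι :=
  WithLp.toLp 2 (WithLp.ofLp x ⊓ WithLp.ofLp y)

variable (x y : EuclideanSpace ℝ ι)

@[simp]
theorem coordMax_apply (i : ι) : coordMax x y i = max (x i) (y i) := rfl

@[simp]
theorem coordMin_apply (i : ι) : coordMin x y i = min (x i) (y i) := rfl

theorem add_sub_coordMin : y + (x - coordMin x y) = coordMax x y := by
  ext i
  simp only [PiLp.add_apply, PiLp.sub_apply, coordMin_apply, coordMax_apply]
  linarith [min_add_max (x i) (y i)]

theorem inner_coordMax_sub_coordMin [Fintype ι] : ⟪coordMax x y - x, x - coordMin x y⟫ = 0 := by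
  simp only [PiLp.inner_apply, PiLp.sub_apply, coordMax_apply, coordMin_apply]
  refine Finset.sum_eq_zero fun i _ => ?_
  rcases le_total (x i) (y i) with h | h <;> simp [h]

theorem sub_eq_coordMax_sub_sub_coordMin : y - x = (coordMax x y - x) - (x - coordMin x y) := by
  rw [← add_sub_coordMin]
  abel

theorem norm_sub_sq_eq_coordMax_coordMin [Fintype ι] :
    ‖y - x‖ ^ 2 = ‖coordMax x y - x‖ ^ 2 + ‖x - coordMin x y‖ ^ 2 := by
  rw [sub_eq_coordMax_sub_sub_coordMin, norm_sub_sq_real, inner_coordMax_sub_coordMin]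
  ring

end EuclideanSpace

open EuclideanSpace

theorem coordMax_mem_unitBox {d : ℕ} {x y : EuclideanSpace ℝ (Fin d)} (hx : x ∈ unitBox d)
    (hy : y ∈ unitBox d) : coordMax x y ∈ unitBox d :=
  fun i => ⟨le_max_of_le_left (hx i).1, max_le (hx i).2 (hy i).2⟩

theorem coordMin_mem_unitBox {d : ℕ} {x y : EuclideanSpace ℝ (Fin d)} (hx : x ∈ unitBox d)
    (hy : y ∈ unitBox d) : coordMin x y ∈ unitBox d :=
  fun i => ⟨le_min (hx i).1 (hy i).1, min_le_of_left_le (hx i).2⟩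

theorem monotone_upConcave_quadratizable_general
    (d : ℕ) (γ μ c : ℝ) (hγ0 : 0 < γ) (hγ1 : γ ≤ 1) (hc0 : 0 ≤ c)
    (f : EuclideanSpace ℝ (Fin d) → ℝ)
    (gt : EuclideanSpace ℝ (Fin d) → EuclideanSpace ℝ (Fin d))
    (hnonneg : ∀ x ∈ unitBox d, 0 ≤ f x)
    (hsupergrad : ∀ x ∈ unitBox d, ∀ y ∈ unitBox d, (∀ i, x i ≤ y i) →
      γ * (⟪gt y, y - x⟫ + μ / 2 * ‖y - x‖ ^ 2) ≤ f y - f x ∧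
      f y - f x ≤ (1 / γ) * (⟪gt x, y - x⟫ - μ / 2 * ‖y - x‖ ^ 2))
    (hcurv : ∀ x ∈ unitBox d, ∀ y ∈ unitBox d, ∀ z : EuclideanSpace ℝ (Fin d),
      (∀ i, 0 ≤ z i) → x + z ∈ unitBox d → y + z ∈ unitBox d →
      (1 - c) * (f (x + z) - f x) ≤ f (y + z) - f y) :
    ∀ x ∈ unitBox d, ∀ y ∈ unitBox d,
      γ ^ 2 / (1 + c * γ ^ 2) * f y - f x ≤
        γ / (1 + c * γ ^ 2) * (⟪gt x, y - x⟫ - μ / 2 * ‖y - x‖ ^ 2) := by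
  intro x hx y hy
  have hu := coordMax_mem_unitBox hx hy
  have hw := coordMin_mem_unitBox hx hy
  have hup := (hsupergrad x hx _ hu fun i => le_max_left (x i) (y i)).2
  have hdown := (hsupergrad _ hw x hx fun i => min_le_left (x i) (y i)).1
  have hshift := hcurv _ hw y hy (x - coordMin x y)
    (fun i => sub_nonneg.2 (min_le_left (x i) (y i)))
    (by rwa [add_sub_cancel]) (by rwa [add_sub_coordMin])
  rw [add_sub_cancel, add_sub_coordMin] at hshift
  calc γ ^ 2 / (1 + c * γ ^ 2) * f y - f x
      ≤ γ / (1 + c * γ ^ 2) * ((⟪gt x, coordMax x y - x⟫ - μ / 2 * ‖coordMax x y - x‖ ^ 2)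
          - (⟪gt x, x - coordMin x y⟫ + μ / 2 * ‖x - coordMin x y‖ ^ 2)) :=
        weighted_sub_le_of_superGradient_curvature_bounds hγ0 hγ1 hc0 (hnonneg _ hw)
          hup hdown hshift
    _ = γ / (1 + c * γ ^ 2) * (⟪gt x, y - x⟫ - μ / 2 * ‖y - x‖ ^ 2) := by
        rw [norm_sub_sq_eq_coordMax_coordMin x y, sub_eq_coordMax_sub_sub_coordMin x y,
          inner_sub_right (gt x) (coordMax x y - x)]
        ring

/-- Lemma 1 (monotone up-concave over general convex sets): if `f : [0,1]^d → ℝ` is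
non-negative, monotone, `γ`-weakly up-concave with a `μ`-strongly `γ`-weakly
up-super-gradient `g̃` and curvature bounded by `c`, then for all `x, y ∈ [0,1]^d`,
`(γ²/(1+cγ²)) f(y) − f(x) ≤ (γ/(1+cγ²)) (⟨g̃(x), y−x⟩ − (μ/2)‖y−x‖²)`. -/
theorem monotone_upConcave_quadratizable
    (d : ℕ) (γ μ c : ℝ) (hγ0 : 0 < γ) (hγ1 : γ ≤ 1) (hμ : 0 ≤ μ) (hc0 : 0 ≤ c) (hc1 : c ≤ 1)
    (f : EuclideanSpace ℝ (Fin d) → ℝ)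
    (gt : EuclideanSpace ℝ (Fin d) → EuclideanSpace ℝ (Fin d))
    (hnonneg : ∀ x ∈ unitBox d, 0 ≤ f x)
    (hmono : ∀ x ∈ unitBox d, ∀ y ∈ unitBox d, (∀ i, x i ≤ y i) → f x ≤ f y)
    (hsupergrad : ∀ x ∈ unitBox d, ∀ y ∈ unitBox d, (∀ i, x i ≤ y i) →
      γ * (⟪gt y, y - x⟫ + μ / 2 * ‖y - x‖ ^ 2) ≤ f y - f x ∧
      f y - f x ≤ (1 / γ) * (⟪gt x, y - x⟫ - μ / 2 * ‖y - x‖ ^ 2))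
    (hcurv : ∀ x ∈ unitBox d, ∀ y ∈ unitBox d, ∀ z : EuclideanSpace ℝ (Fin d),
      (∀ i, 0 ≤ z i) → x + z ∈ unitBox d → y + z ∈ unitBox d →
      (1 - c) * (f (x + z) - f x) ≤ f (y + z) - f y) :
    ∀ x ∈ unitBox d, ∀ y ∈ unitBox d,
      γ ^ 2 / (1 + c * γ ^ 2) * f y - f x ≤
        γ / (1 + c * γ ^ 2) * (⟪gt x, y - x⟫ - μ / 2 * ‖y - x‖ ^ 2) :=
  monotone_upConcave_quadratizable_general d γ μ c hγ0 hγ1 hc0 f gt hnonneg hsupergrad hcurv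
end

section
/- Let f : [0,1]^d → R be a non-negative monotone function with curvature bounded by c ∈ [0,1] and γ ∈ (0,1]. Then for all x, y ∈ [0,1]^d: (f(x∨y) − f(x)) + (1/γ²)(f(x∧y) − f(x)) ≥ f(y) − (c + 1/γ²) f(x). -/
/-! The increment `z = x - x ⊓ y` carries `x ⊓ y` to `x` and `y` to `x ⊔ y`, so the curvature
bound compares `f x - f (x ⊓ y)` with `f (x ⊔ y) - f y`. Substituting this, the claim reduces to
`(1/γ² - 1 + c) f (x ⊓ y) ≥ 0`, which holds because `γ ≤ 1`, `c ≥ 0` and `f ≥ 0`. -/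

section Lattice

variable {α : Type*} [Lattice α]

theorem inf_mem_Icc {a b x y : α} (hx : x ∈ Set.Icc a b) (hy : y ∈ Set.Icc a b) :
    x ⊓ y ∈ Set.Icc a b :=
  ⟨le_inf hx.1 hy.1, inf_le_left.trans hx.2⟩

theorem sup_mem_Icc {a b x y : α} (hx : x ∈ Set.Icc a b) (hy : y ∈ Set.Icc a b) :
    x ⊔ y ∈ Set.Icc a b :=
  ⟨hx.1.trans le_sup_left, sup_le hx.2 hy.2⟩

end Lattice

section LatticeOrderedGroup

variable {α : Type*} [Lattice α] [AddCommGroup α] [AddLeftMono α]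

theorem add_sub_inf_eq_sup (x y : α) : y + (x - x ⊓ y) = x ⊔ y := by
  rw [← add_sub_assoc, add_comm y x, ← inf_add_sup x y, add_sub_cancel_left]

theorem curvature_bound_inf_sup {β : Type*} [Ring β] [PartialOrder β] {a b : α} {c : β}
    {f : α → β}
    (hcurv : ∀ x ∈ Set.Icc a b, ∀ y ∈ Set.Icc a b, ∀ z : α, 0 ≤ z → x + z ∈ Set.Icc a b →
      y + z ∈ Set.Icc a b → (1 - c) * (f (x + z) - f x) ≤ f (y + z) - f y)
    {x y : α} (hx : x ∈ Set.Icc a b) (hy : y ∈ Set.Icc a b) :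
    (1 - c) * (f x - f (x ⊓ y)) ≤ f (x ⊔ y) - f y := by
  have hshift : x ⊓ y + (x - x ⊓ y) = x := add_sub_cancel (x ⊓ y) x
  have h := hcurv (x ⊓ y) (inf_mem_Icc hx hy) y hy (x - x ⊓ y) (sub_nonneg.2 inf_le_left)
    (by rwa [hshift]) (by rw [add_sub_inf_eq_sup]; exact sup_mem_Icc hx hy)
  rwa [hshift, add_sub_inf_eq_sup] at h

end LatticeOrderedGroup

theorem curvature_sup_inf_inequality_general
    (d : ℕ) (γ c : ℝ) (hγ0 : 0 < γ) (hγ1 : γ ≤ 1) (hc0 : 0 ≤ c)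
    (f : (Fin d → ℝ) → ℝ)
    (hnonneg : ∀ x ∈ Set.Icc (0 : Fin d → ℝ) 1, 0 ≤ f x)
    (hcurv : ∀ x ∈ Set.Icc (0 : Fin d → ℝ) 1, ∀ y ∈ Set.Icc (0 : Fin d → ℝ) 1,
      ∀ z : Fin d → ℝ, 0 ≤ z → x + z ∈ Set.Icc (0 : Fin d → ℝ) 1 →
        y + z ∈ Set.Icc (0 : Fin d → ℝ) 1 →
        (1 - c) * (f (x + z) - f x) ≤ f (y + z) - f y) :
    ∀ x ∈ Set.Icc (0 : Fin d → ℝ) 1, ∀ y ∈ Set.Icc (0 : Fin d → ℝ) 1,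
      f y - (c + 1 / γ ^ 2) * f x ≤
        (f (x ⊔ y) - f x) + (1 / γ ^ 2) * (f (x ⊓ y) - f x) := by
  intro x hx y hy
  have hbound := curvature_bound_inf_sup hcurv hx hy
  have hγ : 1 ≤ 1 / γ ^ 2 := one_le_one_div (by positivity) (pow_le_one₀ hγ0.le hγ1)
  have hslack : 0 ≤ (1 / γ ^ 2 - 1 + c) * f (x ⊓ y) :=
    mul_nonneg (by linarith) (hnonneg _ (inf_mem_Icc hx hy))
  linarith

/-- The curvature-based inequality: for a non-negative monotone `f : [0,1]^d → ℝ` with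
curvature bounded by `c ∈ [0,1]` and `γ ∈ (0,1]`,
`(f(x∨y) − f(x)) + (1/γ²)(f(x∧y) − f(x)) ≥ f(y) − (c + 1/γ²) f(x)`. -/
theorem curvature_sup_inf_inequality
    (d : ℕ) (γ c : ℝ) (hγ0 : 0 < γ) (hγ1 : γ ≤ 1) (hc0 : 0 ≤ c) (hc1 : c ≤ 1)
    (f : (Fin d → ℝ) → ℝ)
    (hnonneg : ∀ x ∈ Set.Icc (0 : Fin d → ℝ) 1, 0 ≤ f x)
    (hmono : ∀ x ∈ Set.Icc (0 : Fin d → ℝ) 1, ∀ y ∈ Set.Icc (0 : Fin d → ℝ) 1,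
      x ≤ y → f x ≤ f y)
    (hcurv : ∀ x ∈ Set.Icc (0 : Fin d → ℝ) 1, ∀ y ∈ Set.Icc (0 : Fin d → ℝ) 1,
      ∀ z : Fin d → ℝ, 0 ≤ z → x + z ∈ Set.Icc (0 : Fin d → ℝ) 1 →
        y + z ∈ Set.Icc (0 : Fin d → ℝ) 1 →
        (1 - c) * (f (x + z) - f x) ≤ f (y + z) - f y) :
    ∀ x ∈ Set.Icc (0 : Fin d → ℝ) 1, ∀ y ∈ Set.Icc (0 : Fin d → ℝ) 1,
      f y - (c + 1 / γ ^ 2) * f x ≤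
        (f (x ⊔ y) - f x) + (1 / γ ^ 2) * (f (x ⊓ y) - f x) :=
  curvature_sup_inf_inequality_general d γ c hγ0 hγ1 hc0 f hnonneg hcurv
end

section
/- Let K ⊆ R^d be a convex set, c ∈ relint(K), r > 0 with aff(K) ∩ B_r(c) ⊆ K, and 0 ≤ δ < r. Define K̂_δ := (1 − δ/r) K + (δ/r) c. Then K̂_δ is convex, K̂_δ ⊆ K, and for every x ∈ K̂_δ, the set aff(K) ∩ B_δ(x) is contained in K. -/
/-!
The map `x ↦ (1 - t) x + t c` with `t = δ / r` is the homothety with centre `c` and ratio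
`1 - t`, so its image of `K` is convex and, as `c ∈ K`, lies in `K`. For the ball property,
write the shrunk point as `x = y + t (c - y)` with `y ∈ K`. Blowing up from `y` by the factor
`1 / t` maps `aff(K) ∩ B_{t r}(x)` into `aff(K) ∩ B_r(c) ⊆ K`, and shrinking back towards
`y ∈ K` stays in `K` by convexity.
-/

open AffineMap Metric Set

theorem dist_homothety_homothety {𝕜 V P : Type*} [NormedField 𝕜] [SeminormedAddCommGroup V]
    [NormedSpace 𝕜 V] [PseudoMetricSpace P] [NormedAddTorsor V P] (c p q : P) (t : 𝕜) :
    dist (homothety c t p) (homothety c t q) = ‖t‖ * dist p q := by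
  simp only [homothety_apply, dist_eq_norm_vsub V, vadd_vsub_vadd_cancel_right, ← smul_sub,
    vsub_sub_vsub_cancel_right, norm_smul]

variable {E : Type*} [NormedAddCommGroup E] [NormedSpace ℝ E]

theorem homothety_one_sub_eq_lineMap (c x : E) (t : ℝ) :
    homothety c (1 - t) x = (1 - t) • x + t • c := by
  rw [homothety_eq_lineMap, lineMap_apply_one_sub, lineMap_apply_module]

theorem Convex.image_homothety_subset {K : Set E} (hK : Convex ℝ K) {c : E} (hc : c ∈ K)
    {s : ℝ} (hs0 : 0 ≤ s) (hs1 : s ≤ 1) : homothety c s '' K ⊆ K := by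
  rintro _ ⟨y, hy, rfl⟩
  exact hK.lineMap_mem hc hy ⟨hs0, hs1⟩

theorem Convex.inter_closedBall_homothety_subset {K : Set E} (hK : Convex ℝ K)
    {A : AffineSubspace ℝ E} {c : E} {r : ℝ} (hball : (A : Set E) ∩ closedBall c r ⊆ K)
    {y : E} (hyK : y ∈ K) (hyA : y ∈ A) {t : ℝ} (ht0 : 0 ≤ t) (ht1 : t ≤ 1) :
    (A : Set E) ∩ closedBall (homothety y t c) (t * r) ⊆ K := by
  rintro z ⟨hzA, hz⟩
  rcases ht0.eq_or_lt with rfl | htpos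
  · rw [zero_mul, closedBall_zero, homothety_zero, const_apply, mem_singleton_iff] at hz
    exact hz ▸ hyK
  set w := homothety y t⁻¹ z
  have hzw : homothety y t w = z := by
    rw [← homothety_mul_apply, mul_inv_cancel₀ htpos.ne', homothety_one, id_apply]
  have hwc : dist w c ≤ r := by
    refine le_of_mul_le_mul_left ?_ htpos
    rw [← Real.norm_of_nonneg ht0, ← dist_homothety_homothety y, hzw, Real.norm_of_nonneg ht0]
    exact hz
  have hwK : w ∈ K := hball ⟨AffineMap.homothety_mem hyA _ hzA, hwc⟩
  rw [← hzw]
  exact hK.lineMap_mem hyK hwK ⟨ht0, ht1⟩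

/-- Let `K ⊆ ℝ^d` be convex, `c ∈ relint(K)` witnessed by `r > 0` with
`aff(K) ∩ B_r(c) ⊆ K`, and `0 ≤ δ < r`. Then the shrunk set
`K̂_δ := (1 − δ/r) K + (δ/r) c` is convex, contained in `K`, and for every `x ∈ K̂_δ`
the set `aff(K) ∩ B_δ(x)` is contained in `K`. -/
theorem shrunk_set_properties
    (d : ℕ) (K : Set (EuclideanSpace ℝ (Fin d))) (hK : Convex ℝ K)
    (c : EuclideanSpace ℝ (Fin d)) (hc : c ∈ K)
    (r δ : ℝ) (hr : 0 < r)
    (hball : (affineSpan ℝ K : Set (EuclideanSpace ℝ (Fin d))) ∩ Metric.closedBall c r ⊆ K)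
    (hδ0 : 0 ≤ δ) (hδr : δ < r) :
    Convex ℝ ((fun x => (1 - δ / r) • x + (δ / r) • c) '' K) ∧
    (fun x => (1 - δ / r) • x + (δ / r) • c) '' K ⊆ K ∧
    ∀ x ∈ (fun x => (1 - δ / r) • x + (δ / r) • c) '' K,
      (affineSpan ℝ K : Set (EuclideanSpace ℝ (Fin d))) ∩ Metric.closedBall x δ ⊆ K := by
  set t := δ / r
  have ht0 : 0 ≤ t := div_nonneg hδ0 hr.le
  have ht1 : t ≤ 1 := ((div_lt_one hr).mpr hδr).le
  have hmap : (fun x => (1 - t) • x + t • c) = homothety c (1 - t) :=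
    funext fun x => (homothety_one_sub_eq_lineMap c x t).symm
  rw [hmap]
  refine ⟨hK.affine_image _, hK.image_homothety_subset hc (by linarith) (by linarith), ?_⟩
  rintro _ ⟨y, hy, rfl⟩
  have hδ : δ = t * r := (div_mul_cancel₀ δ hr.ne').symm
  rw [homothety_eq_lineMap, lineMap_apply_one_sub, ← homothety_eq_lineMap, hδ]
  exact hK.inter_closedBall_homothety_subset hball hy (subset_affineSpan ℝ K hy) ht0 ht1
end

section
/- Let f : [0,1]^d → R be non-negative, monotone, differentiable and γ-weakly up-concave, γ ∈ (0,1]. Then for all x, y ∈ [0,1]^d and z ∈ [0,1]: ⟨∇f(z·x), y⟩ ≥ γ ( f(y) − f(z·x) ). -/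
/-!
Put `w = z • x` and `m = y ⊔ w` coordinatewise. Monotonicity gives `f y ≤ f m` and the upper
up-concavity bound gives `γ (f m - f w) ≤ ⟪∇f w, m - w⟫`. Monotonicity also makes `∇f w`
coordinatewise nonnegative, and `0 ≤ m - w ≤ y`, so `⟪∇f w, m - w⟫ ≤ ⟪∇f w, y⟫`.
-/

open scoped RealInnerProductSpace

open Set

theorem HasGradientAt.hasDerivAt_add_smul {F : Type*} [NormedAddCommGroup F]
    [InnerProductSpace ℝ F] [CompleteSpace F] {f : F → ℝ} {g w : F} (hf : HasGradientAt f g w)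
    (v : F) : HasDerivAt (fun t : ℝ => f (w + t • v)) ⟪g, v⟫ 0 := by
  have hline : HasDerivAt (fun t : ℝ => w + t • v) v 0 := by
    simpa using ((hasDerivAt_id (0 : ℝ)).smul_const v).const_add w
  have hf' : HasFDerivAt f (InnerProductSpace.toDual ℝ F g) (w + (0 : ℝ) • v) := by
    simpa using hf.hasFDerivAt
  exact hf'.comp_hasDerivAt (0 : ℝ) hline

section unitBox

variable {d : ℕ}

theorem smul_mem_unitBox {x : EuclideanSpace ℝ (Fin d)} {z : ℝ} (hz : z ∈ Icc 0 1)
    (hx : x ∈ unitBox d) : z • x ∈ unitBox d := fun i =>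
  ⟨mul_nonneg hz.1 (hx i).1, mul_le_one₀ hz.2 (hx i).1 (hx i).2⟩

/-- `EuclideanSpace` carries no lattice structure of its own. -/
def coordSup (x y : EuclideanSpace ℝ (Fin d)) : EuclideanSpace ℝ (Fin d) :=
  WithLp.toLp 2 (x.ofLp ⊔ y.ofLp)

theorem coordSup_mem_unitBox {x y : EuclideanSpace ℝ (Fin d)} (hx : x ∈ unitBox d)
    (hy : y ∈ unitBox d) : coordSup x y ∈ unitBox d := fun i =>
  ⟨le_max_of_le_left (hx i).1, max_le (hx i).2 (hy i).2⟩

theorem add_smul_single_mem_unitBox {w : EuclideanSpace ℝ (Fin d)} (hw : w ∈ unitBox d)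
    (i : Fin d) {t : ℝ} (ht : t ∈ Icc (-w i) (1 - w i)) :
    w + t • EuclideanSpace.single i 1 ∈ unitBox d := by
  intro j
  by_cases hj : j = i
  · subst hj
    simp only [PiLp.add_apply, PiLp.smul_apply, PiLp.single_apply, if_pos, smul_eq_mul, mul_one,
      mem_Icc]
    constructor <;> linarith [ht.1, ht.2]
  · simpa [hj] using hw j

/-- The `i`-th coordinate line through `w` meets the box in the nondegenerate interval
`[-w i, 1 - w i]`, so `g i` is a derivative within an interval of a monotone function, even when
`w` lies on the boundary. -/
theorem gradient_nonneg_of_monotoneOn_unitBox {f : EuclideanSpace ℝ (Fin d) → ℝ}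
    {g w : EuclideanSpace ℝ (Fin d)} (hf : HasGradientAt f g w) (hw : w ∈ unitBox d)
    (hmono : ∀ u ∈ unitBox d, ∀ v ∈ unitBox d, (∀ i, u i ≤ v i) → f u ≤ f v) (i : Fin d) :
    0 ≤ g i := by
  set e : EuclideanSpace ℝ (Fin d) := EuclideanSpace.single i 1
  have hmonoOn : MonotoneOn (fun t : ℝ => f (w + t • e)) (Icc (-w i) (1 - w i)) := by
    intro s hs t ht hst
    refine hmono _ (add_smul_single_mem_unitBox hw i hs) _ (add_smul_single_mem_unitBox hw i ht)
      fun j => ?_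
    by_cases hj : j = i
    · subst hj; simpa [e] using hst
    · simp [e, hj]
  have hderiv := (hf.hasDerivAt_add_smul e).hasDerivWithinAt (s := Icc (-w i) (1 - w i))
  rw [EuclideanSpace.inner_single_right, one_mul, conj_trivial] at hderiv
  have hzero : (0 : ℝ) ∈ Icc (-w i) (1 - w i) := ⟨by linarith [(hw i).1], by linarith [(hw i).2]⟩
  rw [← hderiv.derivWithin (uniqueDiffOn_Icc (by linarith) 0 hzero)]
  exact hmonoOn.derivWithin_nonneg

theorem inner_coordSup_sub_le {g w y : EuclideanSpace ℝ (Fin d)} (hg : ∀ i, 0 ≤ g i)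
    (hw : ∀ i, 0 ≤ w i) (hy : ∀ i, 0 ≤ y i) : ⟪g, coordSup y w - w⟫ ≤ ⟪g, y⟫ := by
  simp only [PiLp.inner_apply, PiLp.sub_apply, RCLike.inner_apply, conj_trivial]
  refine Finset.sum_le_sum fun i _ => mul_le_mul_of_nonneg_right ?_ (hg i)
  exact sub_le_iff_le_add.mpr
    (max_le (le_add_of_nonneg_right (hw i)) (le_add_of_nonneg_left (hy i)))

end unitBox

theorem inner_grad_lower_bound_general
    (d : ℕ) (γ : ℝ) (hγ0 : 0 < γ)
    (f : EuclideanSpace ℝ (Fin d) → ℝ)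
    (g : EuclideanSpace ℝ (Fin d) → EuclideanSpace ℝ (Fin d))
    (hderiv : ∀ x ∈ unitBox d, HasGradientAt f (g x) x)
    (hmono : ∀ u ∈ unitBox d, ∀ v ∈ unitBox d, (∀ i, u i ≤ v i) → f u ≤ f v)
    (hupconcave : ∀ u ∈ unitBox d, ∀ v ∈ unitBox d, (∀ i, u i ≤ v i) →
      γ * ⟪g v, v - u⟫ ≤ f v - f u ∧ f v - f u ≤ (1 / γ) * ⟪g u, v - u⟫) :
    ∀ x ∈ unitBox d, ∀ y ∈ unitBox d, ∀ z ∈ Set.Icc (0 : ℝ) 1,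
      γ * (f y - f (z • x)) ≤ ⟪g (z • x), y⟫ := by
  intro x hx y hy z hz
  set w := z • x
  have hw : w ∈ unitBox d := smul_mem_unitBox hz hx
  set m := coordSup y w
  have hm : m ∈ unitBox d := coordSup_mem_unitBox hy hw
  have hfy : f y ≤ f m := hmono y hy m hm fun i => le_max_left _ _
  have hconcave : f m - f w ≤ 1 / γ * ⟪g w, m - w⟫ :=
    (hupconcave w hw m hm fun i => le_max_right _ _).2
  have hinner : ⟪g w, m - w⟫ ≤ ⟪g w, y⟫ :=
    inner_coordSup_sub_le (gradient_nonneg_of_monotoneOn_unitBox (hderiv w hw) hw hmono)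
      (fun i => (hw i).1) (fun i => (hy i).1)
  calc γ * (f y - f w) ≤ γ * (f m - f w) := by gcongr
    _ ≤ γ * (1 / γ * ⟪g w, m - w⟫) := by gcongr
    _ = ⟪g w, m - w⟫ := by field_simp
    _ ≤ ⟪g w, y⟫ := hinner

/-- For `f : [0,1]^d → ℝ` non-negative, monotone, differentiable and `γ`-weakly up-concave,
`γ ∈ (0,1]`: for all `x, y ∈ [0,1]^d` and `z ∈ [0,1]`,
`⟨∇f(z·x), y⟩ ≥ γ(f(y) − f(z·x))`. -/
theorem inner_grad_lower_bound
    (d : ℕ) (γ : ℝ) (hγ0 : 0 < γ) (hγ1 : γ ≤ 1)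
    (f : EuclideanSpace ℝ (Fin d) → ℝ)
    (g : EuclideanSpace ℝ (Fin d) → EuclideanSpace ℝ (Fin d))
    (hderiv : ∀ x ∈ unitBox d, HasGradientAt f (g x) x)
    (hnonneg : ∀ x ∈ unitBox d, 0 ≤ f x)
    (hmono : ∀ u ∈ unitBox d, ∀ v ∈ unitBox d, (∀ i, u i ≤ v i) → f u ≤ f v)
    (hupconcave : ∀ u ∈ unitBox d, ∀ v ∈ unitBox d, (∀ i, u i ≤ v i) →
      γ * ⟪g v, v - u⟫ ≤ f v - f u ∧ f v - f u ≤ (1 / γ) * ⟪g u, v - u⟫) :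
    ∀ x ∈ unitBox d, ∀ y ∈ unitBox d, ∀ z ∈ Set.Icc (0 : ℝ) 1,
      γ * (f y - f (z • x)) ≤ ⟪g (z • x), y⟫ :=
  inner_grad_lower_bound_general d γ hγ0 f g hderiv hmono hupconcave
end
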